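/- For the lattice polymer model with polymers being finite connected subsets of ℤ^d, weights satisfying |w(A)| ≤ e^{−η|A|} with η = 2log(2dφ) + φ^{−1} (φ the golden ratio), hard-core interaction ζ(A,A') = −1 if A∩A' ≠ ∅ and 0 otherwise, and a(A) = φ^{−1}|A|, the Koteckỳ–Preiss criterion holds: for every polymer A, ∑_{A' : A'∩A ≠ ∅} |w(A')| e^{a(A')} ≤ a(A). -/

import Mathlib

open Real

open Finset SimpleGraph

variable {V : Type*}

lemma exit_edge {G : SimpleGraph V} {B : Set V} (T : Finset V) :
    ∀ {a b : B} (_ : (G.induce B).Walk a b), (a : V) ∈ T → (b : V) ∉ T →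
      ∃ v u, v ∈ T ∧ u ∈ B ∧ u ∉ T ∧ G.Adj v u := by
  intro a b w
  induction w with
  | nil => intro h1 h2; exact absurd h1 h2
  | @cons a c b h p ih =>
    intro ha hb
    by_cases hc : (c : V) ∈ T
    · exact ih hc hb
    · exact ⟨a, c, ha, c.2, hc, h⟩

lemma exists_boundary {G : SimpleGraph V} {B : Finset V}
    (hconn : (G.induce (B : Set V)).Connected) {T : Finset V}
    (hTB : T ⊆ B) (hT : T.Nonempty) (hne : ¬ B ⊆ T) :
    ∃ v u, v ∈ T ∧ u ∈ B ∧ u ∉ T ∧ G.Adj v u := by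
  obtain ⟨x, hx⟩ := hT
  obtain ⟨u0, hu0B, hu0T⟩ := Finset.not_subset.mp hne
  obtain ⟨w⟩ := hconn.preconnected ⟨x, by exact_mod_cast hTB hx⟩ ⟨u0, by exact_mod_cast hu0B⟩
  exact exit_edge T w hx hu0T

lemma splice [DecidableEq V] {G : SimpleGraph V} {x v u : V} (p : G.Walk x x)
    (hv : v ∈ p.support) (hadj : G.Adj v u) :
    ∃ q : G.Walk x x, q.length = p.length + 2 ∧
      ∀ z, z ∈ q.support ↔ (z ∈ p.support ∨ z = u) := by
  refine ⟨(p.takeUntil v hv).append (Walk.cons hadj (Walk.cons hadj.symm (p.dropUntil v hv))), ?_, ?_⟩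
  · have h1 := congrArg Walk.length (p.take_spec hv)
    rw [Walk.length_append] at h1
    simp [Walk.length_append]
    omega
  · intro z
    have hsp : p.support = (p.takeUntil v hv).support ++ (p.dropUntil v hv).support.tail := by
      conv_lhs => rw [← p.take_spec hv]
      exact Walk.support_append _ _
    have hd : (p.dropUntil v hv).support = v :: (p.dropUntil v hv).support.tail :=
      Walk.support_eq_cons _
    have hvt : v ∈ (p.takeUntil v hv).support := Walk.end_mem_support _
    rw [Walk.support_append, Walk.support_cons, Walk.support_cons, List.tail_cons, hsp, hd]
    simp only [List.mem_append, List.mem_cons]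
    constructor
    · rintro (h | h | h | h)
      · exact Or.inl (Or.inl h)
      · exact Or.inr h
      · exact Or.inl (Or.inl (h ▸ hvt))
      · exact Or.inl (Or.inr h)
    · rintro ((h | h) | h)
      · exact Or.inl h
      · exact Or.inr (Or.inr (Or.inr h))
      · exact Or.inr (Or.inl h)

lemma exists_span_walk [DecidableEq V] (G : SimpleGraph V) (B : Finset V)
    (hconn : (G.induce (B : Set V)).Connected) (x : V) (hx : x ∈ B) :
    ∃ p : G.Walk x x, (∀ z, z ∈ p.support ↔ z ∈ B) ∧ p.length + 2 ≤ 2 * B.card := by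
  suffices h : ∀ n (T : Finset V), T ⊆ B → x ∈ T → B.card ≤ T.card + n →
      (∃ p : G.Walk x x, (∀ z, z ∈ p.support ↔ z ∈ T) ∧ p.length + 2 ≤ 2 * T.card) →
      ∃ p : G.Walk x x, (∀ z, z ∈ p.support ↔ z ∈ B) ∧ p.length + 2 ≤ 2 * B.card by
    refine h B.card {x} (by simpa) (mem_singleton_self x) (by simp)
      ⟨Walk.nil, ?_, by simp⟩
    intro z; simp [Walk.support_nil]
  intro n
  induction n with
  | zero =>
    intro T hTB hxT hcard hp
    have hTB' : T = B := Finset.eq_of_subset_of_card_le hTB (by omega)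
    rwa [hTB'] at hp
  | succ n ih =>
    rintro T hTB hxT hcard ⟨p, hsupp, hlen⟩
    by_cases hBT : B ⊆ T
    · have hTB' : T = B := subset_antisymm hTB hBT
      rw [← hTB']; exact ⟨p, hsupp, by omega⟩
    · obtain ⟨v, u, hvT, huB, huT, hadj⟩ := exists_boundary hconn hTB ⟨x, hxT⟩ hBT
      obtain ⟨q, hqlen, hqsupp⟩ := splice p ((hsupp v).2 hvT) hadj
      refine ih (insert u T) (insert_subset huB hTB) (Finset.mem_insert_of_mem hxT)
        (by rw [card_insert_of_notMem huT]; omega)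
        ⟨q, fun z => ?_, by rw [card_insert_of_notMem huT, hqlen]; omega⟩
      rw [hqsupp, Finset.mem_insert, hsupp]
      tauto


/-- The nearest-neighbor graph on `ℤ^d`. -/
def latticeGraph (d : ℕ) : SimpleGraph (Fin d → ℤ) where
  Adj x y := (∑ i, |x i - y i|) = 1
  symm := by
    constructor
    intro x y h
    simpa [abs_sub_comm] using h
  loopless := by
    constructor
    intro x h
    simp at h

def unitVec (d : ℕ) (i : Fin d) : Fin d → ℤ := fun j => if j = i then 1 else 0

def stepSet (d : ℕ) : Finset (Fin d → ℤ) :=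
  Finset.univ.image (unitVec d) ∪ Finset.univ.image (fun i => -unitVec d i)

lemma stepSet_card_le (d : ℕ) : (stepSet d).card ≤ 2 * d := by
  calc (stepSet d).card ≤ _ + _ := Finset.card_union_le _ _
    _ ≤ d + d := by
        gcongr <;> exact Finset.card_image_le.trans (by simp)
    _ = 2 * d := by ring

lemma adj_sub_mem_stepSet {d : ℕ} {x y : Fin d → ℤ} (h : (latticeGraph d).Adj x y) :
    y - x ∈ stepSet d := by
  have h1 : ∑ i, |x i - y i| = 1 := h
  have hex : ∃ i, x i - y i ≠ 0 := by
    by_contra hc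
    push_neg at hc
    rw [Finset.sum_eq_zero (fun i _ => by rw [hc i, abs_zero])] at h1
    exact one_ne_zero h1.symm
  obtain ⟨i, hi⟩ := hex
  have hge : 1 ≤ |x i - y i| := Int.one_le_abs hi
  have hle : |x i - y i| ≤ ∑ j, |x j - y j| :=
    Finset.single_le_sum (f := fun j => |x j - y j|) (fun j _ => abs_nonneg _) (Finset.mem_univ i)
  have hieq : |x i - y i| = 1 := by omega
  have herase : ∑ j ∈ Finset.univ.erase i, |x j - y j| = 0 := by
    have h2 := Finset.add_sum_erase Finset.univ (fun j => |x j - y j|) (Finset.mem_univ i)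
    omega
  have hothers : ∀ j, j ≠ i → x j = y j := by
    intro j hj
    have hz := (Finset.sum_eq_zero_iff_of_nonneg (fun k _ => abs_nonneg _)).mp herase j
      (Finset.mem_erase.mpr ⟨hj, Finset.mem_univ j⟩)
    have := abs_eq_zero.mp hz
    omega
  rcases (abs_eq (by norm_num : (0:ℤ) ≤ 1)).mp hieq with hc | hc
  · -- x i - y i = 1, so y - x = -unitVec d i
    apply Finset.mem_union_right
    apply Finset.mem_image.mpr
    refine ⟨i, Finset.mem_univ i, ?_⟩
    funext j
    by_cases hj : j = i
    · subst hj; simp [unitVec]; omega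
    · have := hothers j hj
      simp [unitVec, hj]
      omega
  · apply Finset.mem_union_left
    apply Finset.mem_image.mpr
    refine ⟨i, Finset.mem_univ i, ?_⟩
    funext j
    by_cases hj : j = i
    · subst hj; simp [unitVec]; omega
    · have := hothers j hj
      simp [unitVec, hj]
      omega

def walkSteps {d : ℕ} {x y : Fin d → ℤ} (p : (latticeGraph d).Walk x y) :
    List (Fin d → ℤ) :=
  p.darts.map (fun e => e.toProd.2 - e.toProd.1)

lemma walkSteps_length {d : ℕ} {x y : Fin d → ℤ} (p : (latticeGraph d).Walk x y) :
    (walkSteps p).length = p.length := by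
  simp [walkSteps]

lemma walkSteps_mem {d : ℕ} {x y : Fin d → ℤ} (p : (latticeGraph d).Walk x y) :
    ∀ a ∈ walkSteps p, a ∈ stepSet d := by
  intro a ha
  simp only [walkSteps, List.mem_map] at ha
  obtain ⟨e, _, rfl⟩ := ha
  exact adj_sub_mem_stepSet e.adj

lemma support_eq_scanl {d : ℕ} : ∀ {x y : Fin d → ℤ} (p : (latticeGraph d).Walk x y),
    p.support = List.scanl (· + ·) x (walkSteps p) := by
  intro x y p
  induction p with
  | nil => simp [walkSteps]
  | @cons a c b h p ih =>
    have hstep : walkSteps (Walk.cons h p) = (c - a) :: walkSteps p := by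
      simp [walkSteps, Walk.darts_cons]
    rw [hstep, List.scanl_cons, Walk.support_cons, ih]
    have : a + (c - a) = c := by abel
    rw [this]

/-- A polymer in `ℤ^d`: a finite nonempty connected subset. -/
def IsPolymer (d : ℕ) (A : Finset (Fin d → ℤ)) : Prop :=
  A.Nonempty ∧ ((latticeGraph d).induce (A : Set (Fin d → ℤ))).Connected

open scoped Classical in
noncomputable def polyCode (d : ℕ) (x : Fin d → ℤ) (B : Finset (Fin d → ℤ)) :
    List (Fin d → ℤ) :=
  if h : x ∈ B ∧ ((latticeGraph d).induce (B : Set (Fin d → ℤ))).Connected then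
    walkSteps (exists_span_walk (latticeGraph d) B h.2 x h.1).choose
  else []

lemma polyCode_spec {d : ℕ} {x : Fin d → ℤ} {B : Finset (Fin d → ℤ)}
    (hx : x ∈ B) (hc : ((latticeGraph d).induce (B : Set (Fin d → ℤ))).Connected) :
    (polyCode d x B).length + 2 ≤ 2 * B.card ∧
    (∀ a ∈ polyCode d x B, a ∈ stepSet d) ∧
    (List.scanl (· + ·) x (polyCode d x B)).toFinset = B := by
  have h : x ∈ B ∧ ((latticeGraph d).induce (B : Set (Fin d → ℤ))).Connected := ⟨hx, hc⟩
  obtain ⟨hsupp, hlen⟩ := (exists_span_walk (latticeGraph d) B h.2 x h.1).choose_spec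
  rw [polyCode, dif_pos h]
  refine ⟨by rw [walkSteps_length]; omega, walkSteps_mem _, ?_⟩
  rw [← support_eq_scanl]
  ext z
  rw [List.mem_toFinset]
  exact hsupp z

lemma card_lists_le {α : Type*} [DecidableEq α] (T : Finset (List α)) (D : Finset α) (k : ℕ)
    (h : ∀ l ∈ T, l.length = k ∧ ∀ a ∈ l, a ∈ D) : T.card ≤ D.card ^ k := by
  classical
  have hinj : Function.Injective (fun l : {l // l ∈ T} =>
      (fun i : Fin k => (⟨l.val.get ⟨i, by rw [(h _ l.2).1]; exact i.2⟩,
        (h _ l.2).2 _ (List.get_mem _ _)⟩ : {a // a ∈ D}))) := by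
    rintro ⟨l1, h1⟩ ⟨l2, h2⟩ hf
    ext1
    refine List.ext_get (by rw [(h _ h1).1, (h _ h2).1]) (fun n hn1 hn2 => ?_)
    have := congrFun hf ⟨n, by rw [← (h _ h1).1]; exact hn1⟩
    exact congrArg Subtype.val this
  calc T.card = Fintype.card {l // l ∈ T} := (Fintype.card_coe T).symm
    _ ≤ Fintype.card (Fin k → {a // a ∈ D}) := Fintype.card_le_of_injective _ hinj
    _ = D.card ^ k := by rw [Fintype.card_fun, Fintype.card_coe, Fintype.card_fin]

set_option maxHeartbeats 1000000 in
/-- The Kotecký–Preiss criterion for the lattice polymer model with hard-core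
interaction, weights bounded by `e^{-η|A|}`, `η = 2 log(2dφ) + φ⁻¹`, and
`a(A) = φ⁻¹ |A|`, where `φ` is the golden ratio. -/
theorem polymer_KP_criterion (d : ℕ) (hd : 1 ≤ d) (w : Finset (Fin d → ℤ) → ℂ)
    (hw : ∀ A, IsPolymer d A → ‖w A‖ ≤
      Real.exp (-(2 * Real.log (2 * d * ((Real.sqrt 5 + 1) / 2)) +
        ((Real.sqrt 5 + 1) / 2)⁻¹) * A.card))
    (A : Finset (Fin d → ℤ)) (hA : IsPolymer d A) :
    ∑' A' : {B : Finset (Fin d → ℤ) // IsPolymer d B},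
        (if ((A' : Finset (Fin d → ℤ)) ∩ A).Nonempty then
          ‖w A'‖ * Real.exp (((Real.sqrt 5 + 1) / 2)⁻¹ * (A' : Finset (Fin d → ℤ)).card)
        else 0) ≤ ((Real.sqrt 5 + 1) / 2)⁻¹ * A.card := by
  classical
  have h5 : Real.sqrt 5 ^ 2 = 5 := Real.sq_sqrt (by norm_num)
  have h5n : 0 ≤ Real.sqrt 5 := Real.sqrt_nonneg 5
  have h5a : 2 ≤ Real.sqrt 5 := by nlinarith
  have h5b : Real.sqrt 5 ≤ 3 := by nlinarith
  set φ : ℝ := (Real.sqrt 5 + 1) / 2 with hφdef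
  have hφ1 : (3:ℝ)/2 ≤ φ := by rw [hφdef]; linarith
  have hφ2 : φ ≤ 2 := by rw [hφdef]; linarith
  have hφ0 : 0 < φ := by linarith
  have hφsq : φ^2 = φ + 1 := by rw [hφdef]; field_simp; nlinarith
  have hd1 : (1:ℝ) ≤ (d:ℝ) := by exact_mod_cast hd
  set c : ℝ := 2 * (d:ℝ) * φ with hcdef
  have hc3 : 3 ≤ c := by rw [hcdef]; nlinarith
  have hc0 : 0 < c := by linarith
  have hc1 : c⁻¹ ≤ 1 := by
    rw [inv_le_one_iff₀]; right; linarith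
  have hc1' : 0 ≤ c⁻¹ := by positivity
  apply tsum_le_of_sum_le' (by positivity)
  intro s
  -- termwise bound
  have hterm : ∀ b : {B : Finset (Fin d → ℤ) // IsPolymer d B},
      (if ((b : Finset (Fin d → ℤ)) ∩ A).Nonempty then
        ‖w b‖ * Real.exp (φ⁻¹ * (b : Finset (Fin d → ℤ)).card)
      else 0) ≤ (if ((b : Finset (Fin d → ℤ)) ∩ A).Nonempty then
        (c⁻¹)^(2 * (b : Finset (Fin d → ℤ)).card) else 0) := by
    intro b
    split_ifs with h
    · have hb := hw b.val b.2
      calc ‖w b‖ * Real.exp (φ⁻¹ * (b.val.card : ℝ))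
          ≤ Real.exp (-(2 * Real.log c + φ⁻¹) * (b.val.card : ℝ)) *
            Real.exp (φ⁻¹ * (b.val.card : ℝ)) :=
            mul_le_mul_of_nonneg_right hb (Real.exp_nonneg _)
        _ = Real.exp ((b.val.card : ℝ) * -(2 * Real.log c)) := by
            rw [← Real.exp_add]; congr 1; ring
        _ = Real.exp (-(2 * Real.log c)) ^ (b.val.card) := Real.exp_nat_mul _ _
        _ = (c⁻¹)^(2 * b.val.card) := by
            rw [show -(2 * Real.log c) = Real.log ((c⁻¹)^2) by
                rw [Real.log_pow, Real.log_inv]; push_cast; ring,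
              Real.exp_log (pow_pos (inv_pos.mpr hc0) 2), ← pow_mul]
    · exact le_rfl
  have hFnn : ∀ (B : Finset (Fin d → ℤ)), 0 ≤ (c⁻¹)^(2 * B.card) := fun B => by positivity
  -- per-x bound
  have perx : ∀ x ∈ A, (∑ b ∈ s, if x ∈ (b : Finset (Fin d → ℤ)) then
      (c⁻¹)^(2 * (b : Finset (Fin d → ℤ)).card) else 0) ≤ φ⁻¹ := by
    intro x _
    rw [← Finset.sum_filter]
    set sx := s.filter (fun b : {B : Finset (Fin d → ℤ) // IsPolymer d B} =>
      x ∈ (b : Finset (Fin d → ℤ))) with hsx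
    set code : {B : Finset (Fin d → ℤ) // IsPolymer d B} → List (Fin d → ℤ) :=
      fun b => polyCode d x b.val with hcode
    have hspec : ∀ b ∈ sx, (code b).length + 2 ≤ 2 * (b : Finset (Fin d → ℤ)).card ∧
        (∀ a ∈ code b, a ∈ stepSet d) ∧
        (List.scanl (· + ·) x (code b)).toFinset = b.val := by
      intro b hb
      exact polyCode_spec (Finset.mem_filter.mp hb).2 b.2.2
    have hinj : ∀ b1 ∈ sx, ∀ b2 ∈ sx, code b1 = code b2 → b1 = b2 := by
      intro b1 h1 b2 h2 heq
      apply Subtype.ext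
      rw [← (hspec b1 h1).2.2, ← (hspec b2 h2).2.2, heq]
    set T := sx.image code with hT
    have hTmem : ∀ l ∈ T, ∀ a ∈ l, a ∈ stepSet d := by
      intro l hl
      obtain ⟨b, hb, rfl⟩ := Finset.mem_image.mp hl
      exact (hspec b hb).2.1
    set M := T.sup List.length + 1 with hM
    have hTlen : ∀ l ∈ T, l.length < M := fun l hl => Nat.lt_succ_of_le (Finset.le_sup hl)
    have hTcov : T = (Finset.range M).biUnion (fun k => T.filter (fun l => l.length = k)) := by
      ext l
      simp only [Finset.mem_biUnion, Finset.mem_range, Finset.mem_filter]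
      constructor
      · intro hl; exact ⟨l.length, hTlen l hl, hl, rfl⟩
      · rintro ⟨k, _, hl, _⟩; exact hl
    have hdisj : (↑(Finset.range M) : Set ℕ).PairwiseDisjoint
        (fun k => T.filter (fun l => l.length = k)) := by
      intro k1 _ k2 _ hne
      refine Finset.disjoint_left.mpr ?_
      intro l hl1 hl2
      rw [Finset.mem_filter] at hl1 hl2
      exact hne (by omega)
    have hφinv1 : φ⁻¹ < 1 := by
      rw [inv_lt_one_iff₀]; right; linarith
    have hφinv0 : (0:ℝ) ≤ φ⁻¹ := by positivity
    have hcardk : ∀ k, (((T.filter (fun l => l.length = k)).card : ℝ)) ≤ (2*(d:ℝ))^k := by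
      intro k
      have h1 := card_lists_le (T.filter (fun l => l.length = k)) (stepSet d) k
        (fun l hl => ⟨(Finset.mem_filter.mp hl).2, hTmem l (Finset.mem_filter.mp hl).1⟩)
      have h2 : (stepSet d).card ^ k ≤ (2*d)^k :=
        Nat.pow_le_pow_left (stepSet_card_le d) k
      calc (((T.filter (fun l => l.length = k)).card : ℝ)) ≤ (((2*d)^k : ℕ) : ℝ) := by
            exact_mod_cast h1.trans h2
        _ = (2*(d:ℝ))^k := by push_cast; ring
    calc ∑ b ∈ sx, (c⁻¹)^(2 * (b : Finset (Fin d → ℤ)).card)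
        ≤ ∑ b ∈ sx, (c⁻¹)^((code b).length + 2) :=
          Finset.sum_le_sum (fun b hb => pow_le_pow_of_le_one hc1' hc1 (hspec b hb).1)
      _ = ∑ l ∈ T, (c⁻¹)^(l.length + 2) := (Finset.sum_image (f := fun l => c⁻¹ ^ (l.length + 2)) hinj).symm
      _ = ∑ k ∈ Finset.range M, ∑ l ∈ T.filter (fun l => l.length = k),
            (c⁻¹)^(l.length + 2) := by rw [← Finset.sum_biUnion hdisj, ← hTcov]
      _ = ∑ k ∈ Finset.range M, ((T.filter (fun l => l.length = k)).card : ℝ) *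
            (c⁻¹)^(k + 2) := by
          refine Finset.sum_congr rfl (fun k _ => ?_)
          rw [Finset.sum_congr rfl (fun l hl => by
            rw [(Finset.mem_filter.mp hl).2]), Finset.sum_const, nsmul_eq_mul]
      _ ≤ ∑ k ∈ Finset.range M, (2*(d:ℝ))^k * (c⁻¹)^(k + 2) :=
          Finset.sum_le_sum (fun k _ =>
            mul_le_mul_of_nonneg_right (hcardk k) (by positivity))
      _ = ∑ k ∈ Finset.range M, (c⁻¹)^2 * (φ⁻¹)^k := by
          have hdne : (d:ℝ) ≠ 0 := by positivity
          have hstep : (2*(d:ℝ)) * c⁻¹ = φ⁻¹ := by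
            rw [hcdef, mul_inv, ← mul_assoc, mul_inv_cancel₀ (by positivity : (2*(d:ℝ)) ≠ 0), one_mul]
          refine Finset.sum_congr rfl (fun k _ => ?_)
          rw [pow_add, show (2*(d:ℝ))^k * ((c⁻¹)^k * (c⁻¹)^2) =
            ((2*(d:ℝ)) * c⁻¹)^k * (c⁻¹)^2 by rw [mul_pow]; ring, hstep]
          ring
      _ = (c⁻¹)^2 * ∑ k ∈ Finset.range M, (φ⁻¹)^k := by rw [Finset.mul_sum]
      _ ≤ (c⁻¹)^2 * (1 - φ⁻¹)⁻¹ := by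
          refine mul_le_mul_of_nonneg_left ?_ (by positivity)
          calc ∑ k ∈ Finset.range M, (φ⁻¹)^k ≤ ∑' k : ℕ, (φ⁻¹)^k :=
              Summable.sum_le_tsum _ (fun k _ => by positivity)
                (summable_geometric_of_lt_one hφinv0 hφinv1)
            _ = (1 - φ⁻¹)⁻¹ := tsum_geometric_of_lt_one hφinv0 hφinv1
      _ ≤ φ⁻¹ := by
          have hφinv : φ⁻¹ = φ - 1 :=
            inv_eq_of_mul_eq_one_right (by linear_combination hφsq)
          have h3 : (φ + 1)⁻¹ = 2 - φ :=
            inv_eq_of_mul_eq_one_right (by linear_combination -hφsq)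
          have h1 : (1:ℝ) - φ⁻¹ = (φ^2)⁻¹ := by
            rw [hφinv, hφsq, h3]; ring
          rw [h1, inv_inv]
          have hkey : (c⁻¹)^2 * φ^2 = ((2*(d:ℝ))⁻¹)^2 := by
            rw [hcdef, mul_inv, mul_pow, mul_assoc, ← mul_pow,
              inv_mul_cancel₀ hφ0.ne', one_pow, mul_one]
          rw [hkey]
          have h2d : (2:ℝ) ≤ 2*(d:ℝ) := by linarith
          have ha : ((2*(d:ℝ))⁻¹) ≤ 1/2 := by
            simpa [one_div] using one_div_le_one_div_of_le (by norm_num : (0:ℝ) < 2) h2d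
          have hb : (4:ℝ)⁻¹ ≤ φ⁻¹ := by
            simpa [one_div] using one_div_le_one_div_of_le hφ0 (show φ ≤ 4 by linarith)
          calc ((2*(d:ℝ))⁻¹)^2 ≤ (1/2)^2 := pow_le_pow_left₀ (by positivity) ha 2
            _ = 4⁻¹ := by norm_num
            _ ≤ φ⁻¹ := hb
  -- combine
  calc ∑ b ∈ s, (if ((b : Finset (Fin d → ℤ)) ∩ A).Nonempty then
        ‖w b‖ * Real.exp (φ⁻¹ * (b : Finset (Fin d → ℤ)).card) else 0)
      ≤ ∑ b ∈ s, (if ((b : Finset (Fin d → ℤ)) ∩ A).Nonempty then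
        (c⁻¹)^(2 * (b : Finset (Fin d → ℤ)).card) else 0) :=
        Finset.sum_le_sum (fun b _ => hterm b)
    _ ≤ ∑ b ∈ s, ∑ x ∈ A, (if x ∈ (b : Finset (Fin d → ℤ)) then
        (c⁻¹)^(2 * (b : Finset (Fin d → ℤ)).card) else 0) := by
        refine Finset.sum_le_sum (fun b _ => ?_)
        by_cases hne : ((b : Finset (Fin d → ℤ)) ∩ A).Nonempty
        · rw [if_pos hne]
          obtain ⟨x0, hx0⟩ := hne
          have hx0b : x0 ∈ (b : Finset (Fin d → ℤ)) := (Finset.mem_inter.mp hx0).1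
          have hx0A : x0 ∈ A := (Finset.mem_inter.mp hx0).2
          have h := Finset.single_le_sum
            (f := fun x => if x ∈ (b : Finset (Fin d → ℤ)) then
              (c⁻¹)^(2 * (b : Finset (Fin d → ℤ)).card) else 0)
            (fun i _ => by split_ifs <;> positivity) hx0A
          simpa [if_pos hx0b] using h
        · rw [if_neg hne]
          exact Finset.sum_nonneg (fun i _ => by split_ifs <;> positivity)
    _ = ∑ x ∈ A, ∑ b ∈ s, (if x ∈ (b : Finset (Fin d → ℤ)) then
        (c⁻¹)^(2 * (b : Finset (Fin d → ℤ)).card) else 0) := Finset.sum_comm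
    _ ≤ ∑ x ∈ A, φ⁻¹ := Finset.sum_le_sum perx
    _ = φ⁻¹ * A.card := by rw [Finset.sum_const, nsmul_eq_mul]; ring
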